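/- arXiv:2108.00451 — 2 statements merged into one kernel-verified Lean document; each statement's English description precedes it below -/
import Mathlib

section
/- Suppose (γ^{(n)})_{n∈ℕ} is a sequence of real numbers, y^{(n)} ∈ Y_{γ^{(n)}} for each n, and y^{(n)} → y in the product topology of ℤ^ℤ. Then the sequence (γ^{(n)}) converges to some γ ∈ ℝ, and either y ∈ Y_γ, or γ is rational and y is an aperiodic sequence that is the concatenation of two periodic semi-infinite words, i.e., y is not periodic but there exist N ≥ 0 and p, q ≥ 1 with y_{i+p} = y_i for all i ≥ N and y_{i−q} = y_i for all i ≤ −N. -/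
/-!
Let `F` be a primitive of a word `z` and `d i = F i - i γ` its deviation from the line of
slope `γ`. For every word of `Y_γ` all differences `d j - d i` lie in `(-1, 1)`. Hence the
slopes `γ⁽ⁿ⁾` form a Cauchy sequence, and the deviation of the limit `y` with respect to
`γ = lim γ⁽ⁿ⁾` takes values in some `[s - 1, s]`. Moreover `y` cannot have both a window with
`d j - d i ≥ 1` and one with `d i - d j ≥ 1` (`i < j`): the first forces `γ < γ⁽ⁿ⁾`, the
second `γ⁽ⁿ⁾ < γ`, for `n` large.

If `d` never equals `s - 1`, then `F i = ⌊i γ + s⌋` and `y` is a lower mechanical word; if it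
never equals `s`, then `F i = ⌈i γ + s⌉ - 1` and `y` is an upper one. Both lie in `Y_γ`: the
intercepts `n γ + m` of the shifts of `y^γ` form a group that is either dense (approximate `s`
from the right, where the floor is continuous) or cyclic (its largest element below `s` gives
the same word), and upper words are left limits of lower ones. If `d` takes both values,
`γ` is rational, all maxima of `d` lie on one side of all minima, and `y` agrees with an upper
mechanical word on one half-line and with a lower one on the other, so both tails are
periodic. A period of `y` would make `d` periodic and carry a maximum past a minimum.
-/

/-- The bi-infinite Sturmian sequence of slope `γ`: `(y^γ)_i = ⌊(i+1)γ⌋ - ⌊iγ⌋`. -/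
noncomputable def sturmSeq (γ : ℝ) : ℤ → ℤ := fun i => ⌊((i : ℝ) + 1) * γ⌋ - ⌊(i : ℝ) * γ⌋

/-- The Sturmian system `Y_γ`: the closure (product topology, `ℤ` discrete) of the
shift-orbit of `y^γ`. -/
noncomputable def sturmSystem (γ : ℝ) : Set (ℤ → ℤ) :=
  closure {z : ℤ → ℤ | ∃ n : ℤ, z = fun i => sturmSeq γ (i + n)}

open Filter Topology Function

lemma exists_forall_mem_Icc_of_sub_le_one {ι : Type*} [Nonempty ι] {f : ι → ℝ}
    (h : ∀ i j, f j - f i ≤ 1) : ∃ s, ∀ i, f i ∈ Set.Icc (s - 1) s := by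
  obtain ⟨i₀⟩ := ‹Nonempty ι›
  have hbdd : BddAbove (Set.range f) := ⟨f i₀ + 1, by rintro _ ⟨j, rfl⟩; linarith [h i₀ j]⟩
  refine ⟨⨆ j, f j, fun i => ⟨?_, le_ciSup hbdd i⟩⟩
  have : ⨆ j, f j ≤ f i + 1 := ciSup_le fun j => by linarith [h i j]
  linarith

lemma Function.Periodic.forall_of_forall_ge {α : Type*} {f : ℤ → α} {P : ℤ}
    (hf : Periodic f P) (hP : 0 < P) {p : α → Prop} {R : ℤ} (h : ∀ i, R ≤ i → p (f i))
    (i : ℤ) : p (f i) := by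
  rw [← hf.int_mul |R - i| i]
  apply h
  rw [Int.cast_id]
  nlinarith [le_abs_self (R - i), abs_nonneg (R - i)]

lemma AddSubgroup.exists_isGreatest_of_isLeast_pos {G : AddSubgroup ℝ} {a : ℝ}
    (ha : IsLeast {g | g ∈ G ∧ 0 < g} a) (c : ℝ) : ∃ x, IsGreatest {g | g ∈ G ∧ g ≤ c} x := by
  obtain ⟨⟨haG, ha₀⟩, hmin⟩ := ha
  have hkG : (⌊c / a⌋ : ℝ) * a ∈ G := by simpa using G.zsmul_mem haG ⌊c / a⌋
  refine ⟨⌊c / a⌋ * a, ⟨hkG, (le_div_iff₀ ha₀).1 (Int.floor_le _)⟩, fun g ⟨hgG, hgc⟩ => ?_⟩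
  by_contra! hlt
  have h := hmin ⟨G.sub_mem hgG hkG, sub_pos.2 hlt⟩
  have := (div_lt_iff₀ ha₀).1 (Int.lt_floor_add_one (c / a))
  linarith

lemma eventually_floor_add_nhdsGE (a c : ℝ) : ∀ᶠ x in 𝓝[≥] c, ⌊a + x⌋ = ⌊a + c⌋ := by
  have h : Tendsto (a + ·) (𝓝[≥] c) (𝓝[≥] (a + c)) :=
    tendsto_nhdsWithin_iff.2 ⟨((continuous_const_add a).tendsto c).mono_left nhdsWithin_le_nhds,
      eventually_nhdsWithin_of_forall fun x hx => (add_le_add_iff_left a).2 hx⟩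
  exact tendsto_pure.1 ((tendsto_floor_right_pure_floor _).comp h)

lemma eventually_floor_add_nhdsLT (a c : ℝ) : ∀ᶠ x in 𝓝[<] c, ⌊a + x⌋ = ⌈a + c⌉ - 1 := by
  have h : Tendsto (a + ·) (𝓝[<] c) (𝓝[<] (a + c)) :=
    tendsto_nhdsWithin_iff.2 ⟨((continuous_const_add a).tendsto c).mono_left nhdsWithin_le_nhds,
      eventually_nhdsWithin_of_forall fun x hx => (add_lt_add_iff_left a).2 hx⟩
  exact tendsto_pure.1 ((tendsto_floor_left_pure_ceil_sub_one _).comp h)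

namespace Sturmian

noncomputable def primitive (z : ℤ → ℤ) (j : ℤ) : ℤ :=
  ∑ m ∈ Finset.Ico 0 j, z m - ∑ m ∈ Finset.Ico j 0, z m

lemma primitive_succ (z : ℤ → ℤ) (j : ℤ) : primitive z (j + 1) = primitive z j + z j := by
  rcases le_or_gt 0 j with hj | hj
  · rw [primitive, primitive, ← Finset.sum_Ico_add_eq_sum_Ico_add_one hj,
      Finset.Ico_eq_empty_of_le hj, Finset.Ico_eq_empty_of_le (by omega : (0 : ℤ) ≤ j + 1)]
    simp
  · rw [primitive, primitive, ← Finset.insert_Ico_add_one_left_eq_Ico hj,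
      Finset.sum_insert (by simp), Finset.Ico_eq_empty_of_le hj.le,
      Finset.Ico_eq_empty_of_le (by omega : j + 1 ≤ 0)]
    ring

lemma continuous_primitive (j : ℤ) : Continuous fun z : ℤ → ℤ => primitive z j :=
  (continuous_finsetSum _ fun m _ => continuous_apply m).sub
    (continuous_finsetSum _ fun m _ => continuous_apply m)

lemma sub_eq_primitive_sub {z F : ℤ → ℤ} (hF : ∀ j, F (j + 1) = F j + z j) (i j : ℤ) :
    F j - F i = primitive z j - primitive z i := by
  have hper : Periodic (fun k => F k - primitive z k) 1 := fun k => by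
    simp only [hF, primitive_succ]; ring
  have h (k : ℤ) := by simpa using hper.int_mul_eq k
  linarith [h i, h j]

noncomputable def deviation (γ : ℝ) (z : ℤ → ℤ) (i : ℤ) : ℝ := primitive z i - i * γ

lemma deviation_sub_deviation (γ : ℝ) (z : ℤ → ℤ) (i j : ℤ) :
    deviation γ z j - deviation γ z i =
      ((primitive z j - primitive z i : ℤ) : ℝ) - (j - i) * γ := by
  push_cast [deviation]; ring

lemma deviation_succ (γ : ℝ) (z : ℤ → ℤ) (i : ℤ) :
    deviation γ z (i + 1) = deviation γ z i + z i - γ := by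
  push_cast [deviation, primitive_succ]; ring

noncomputable def lowerMechanical (γ c : ℝ) (i : ℤ) : ℤ :=
  ⌊((i : ℝ) + 1) * γ + c⌋ - ⌊(i : ℝ) * γ + c⌋

noncomputable def upperMechanical (γ c : ℝ) (i : ℤ) : ℤ :=
  ⌈((i : ℝ) + 1) * γ + c⌉ - ⌈(i : ℝ) * γ + c⌉

lemma lowerMechanical_periodic {γ : ℝ} (c : ℝ) {p m : ℤ} (hp : (p : ℝ) * γ = m) :
    Periodic (lowerMechanical γ c) p := fun i => by
  have h (x : ℝ) : ⌊(x + p) * γ + c⌋ = ⌊x * γ + c⌋ + m := by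
    rw [← Int.floor_add_intCast, ← hp]; ring_nf
  simp only [lowerMechanical]; push_cast
  rw [add_right_comm (i : ℝ), h, h]; ring

lemma upperMechanical_periodic {γ : ℝ} (c : ℝ) {p m : ℤ} (hp : (p : ℝ) * γ = m) :
    Periodic (upperMechanical γ c) p := fun i => by
  have h (x : ℝ) : ⌈(x + p) * γ + c⌉ = ⌈x * γ + c⌉ + m := by
    rw [← Int.ceil_add_intCast, ← hp]; ring_nf
  simp only [upperMechanical]; push_cast
  rw [add_right_comm (i : ℝ), h, h]; ring

lemma lowerMechanical_intCast_mul (γ : ℝ) (n : ℤ) :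
    lowerMechanical γ (n * γ) = fun i => sturmSeq γ (i + n) := by
  ext i; simp only [lowerMechanical, sturmSeq]; push_cast; ring_nf

lemma lowerMechanical_add_intCast (γ c : ℝ) (m : ℤ) :
    lowerMechanical γ (c + m) = lowerMechanical γ c := by
  ext i; simp only [lowerMechanical, ← add_assoc, Int.floor_add_intCast]; ring

lemma tendsto_lowerMechanical_nhdsGE (γ c : ℝ) :
    Tendsto (lowerMechanical γ) (𝓝[≥] c) (𝓝 (lowerMechanical γ c)) := by
  refine tendsto_pi_nhds.2 fun i => ?_
  rw [nhds_discrete, tendsto_pure]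
  filter_upwards [eventually_floor_add_nhdsGE (((i : ℝ) + 1) * γ) c,
    eventually_floor_add_nhdsGE ((i : ℝ) * γ) c] with x h₁ h₀
  simp only [lowerMechanical, h₁, h₀]

lemma tendsto_lowerMechanical_nhdsLT (γ c : ℝ) :
    Tendsto (lowerMechanical γ) (𝓝[<] c) (𝓝 (upperMechanical γ c)) := by
  refine tendsto_pi_nhds.2 fun i => ?_
  rw [nhds_discrete, tendsto_pure]
  filter_upwards [eventually_floor_add_nhdsLT (((i : ℝ) + 1) * γ) c,
    eventually_floor_add_nhdsLT ((i : ℝ) * γ) c] with x h₁ h₀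
  simp only [lowerMechanical, upperMechanical, h₁, h₀]; ring

lemma lowerMechanical_eq_of_isGreatest {γ c x : ℝ}
    (hx : IsGreatest {g | g ∈ AddSubgroup.closure ({γ, 1} : Set ℝ) ∧ g ≤ c} x) :
    lowerMechanical γ x = lowerMechanical γ c := by
  have key (k : ℤ) : ⌊k * γ + x⌋ = ⌊k * γ + c⌋ := by
    have hmem : (⌊k * γ + c⌋ : ℝ) - k * γ ∈ AddSubgroup.closure ({γ, 1} : Set ℝ) :=
      AddSubgroup.mem_closure_pair.2 ⟨-k, ⌊k * γ + c⌋, by simp; ring⟩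
    have hle := hx.2 ⟨hmem, by linarith [Int.floor_le (k * γ + c)]⟩
    rw [Int.floor_eq_iff]
    constructor
    · linarith
    · linarith [hx.1.2, Int.lt_floor_add_one (k * γ + c)]
  ext i
  have h₁ := key (i + 1)
  push_cast at h₁
  simp only [lowerMechanical, h₁, key]

lemma isClosed_sturmSystem (γ : ℝ) : IsClosed (sturmSystem γ) := isClosed_closure

lemma lowerMechanical_mem_of_mem_closure_pair {γ x : ℝ}
    (hx : x ∈ AddSubgroup.closure ({γ, 1} : Set ℝ)) : lowerMechanical γ x ∈ sturmSystem γ := by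
  obtain ⟨n, m, rfl⟩ := AddSubgroup.mem_closure_pair.1 hx
  rw [zsmul_eq_mul, zsmul_one, lowerMechanical_add_intCast, lowerMechanical_intCast_mul]
  exact subset_closure ⟨n, rfl⟩

lemma lowerMechanical_mem_sturmSystem (γ c : ℝ) : lowerMechanical γ c ∈ sturmSystem γ := by
  set G := AddSubgroup.closure ({γ, 1} : Set ℝ)
  by_cases hd : Dense (G : Set ℝ)
  · have hc : c ∈ closure (Set.Ioi c ∩ G) :=
      closure_minimal (hd.open_subset_closure_inter isOpen_Ioi) isClosed_closure
        (by simp [closure_Ioi])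
    have := mem_closure_iff_nhdsWithin_neBot.1 hc
    refine (isClosed_sturmSystem γ).mem_of_tendsto ((tendsto_lowerMechanical_nhdsGE γ c).mono_left
      (nhdsWithin_mono c fun x (hx : x ∈ Set.Ioi c ∩ G) => Set.mem_Ici.2 hx.1.le)) ?_
    exact eventually_nhdsWithin_of_forall fun x (hx : x ∈ Set.Ioi c ∩ G) =>
      lowerMechanical_mem_of_mem_closure_pair hx.2
  · have hone : (1 : ℝ) ∈ G := AddSubgroup.subset_closure (by simp)
    have hbot : G ≠ ⊥ := fun h => by simp [h] at hone
    obtain ⟨a, ha⟩ := not_not.1 (mt (AddSubgroup.dense_of_no_min G hbot) hd)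
    obtain ⟨x, hx⟩ := AddSubgroup.exists_isGreatest_of_isLeast_pos ha c
    rw [← lowerMechanical_eq_of_isGreatest hx]
    exact lowerMechanical_mem_of_mem_closure_pair hx.1.1

lemma upperMechanical_mem_sturmSystem (γ c : ℝ) : upperMechanical γ c ∈ sturmSystem γ :=
  (isClosed_sturmSystem γ).mem_of_tendsto (tendsto_lowerMechanical_nhdsLT γ c)
    (Eventually.of_forall fun x => lowerMechanical_mem_sturmSystem γ x)

lemma abs_deviation_lowerMechanical_sub_lt_one (γ c : ℝ) (i j : ℤ) :
    |deviation γ (lowerMechanical γ c) j - deviation γ (lowerMechanical γ c) i| < 1 := by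
  rw [deviation_sub_deviation, ← sub_eq_primitive_sub (F := fun k : ℤ => ⌊(k : ℝ) * γ + c⌋)
    (fun k => by simp [lowerMechanical]), abs_lt]
  push_cast
  constructor <;> linarith [Int.floor_le ((j : ℝ) * γ + c), Int.floor_le ((i : ℝ) * γ + c),
    Int.lt_floor_add_one ((j : ℝ) * γ + c), Int.lt_floor_add_one ((i : ℝ) * γ + c)]

lemma abs_deviation_sub_lt_one {γ : ℝ} {z : ℤ → ℤ} (hz : z ∈ sturmSystem γ) (i j : ℤ) :
    |deviation γ z j - deviation γ z i| < 1 := by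
  have hclosed : IsClosed {z : ℤ → ℤ | ∀ i j, |deviation γ z j - deviation γ z i| < 1} := by
    simp only [Set.ofPred_forall, deviation_sub_deviation]
    exact isClosed_iInter fun i => isClosed_iInter fun j =>
      (isClosed_discrete {m : ℤ | |(m : ℝ) - (j - i) * γ| < 1}).preimage
        ((continuous_primitive j).sub (continuous_primitive i))
  refine closure_minimal ?_ hclosed hz i j
  rintro _ ⟨n, rfl⟩
  rw [← lowerMechanical_intCast_mul]
  exact abs_deviation_lowerMechanical_sub_lt_one γ _

section Limit

variable {γseq : ℕ → ℝ} {yseq : ℕ → ℤ → ℤ} {y : ℤ → ℤ}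

lemma eventually_primitive_eq (hconv : Tendsto yseq atTop (𝓝 y)) (j : ℤ) :
    ∀ᶠ n in atTop, primitive (yseq n) j = primitive y j := by
  have h := ((continuous_primitive j).tendsto y).comp hconv
  rwa [nhds_discrete, tendsto_pure] at h

lemma eventually_abs_deviation_sub_lt_one (hmem : ∀ n, yseq n ∈ sturmSystem (γseq n))
    (hconv : Tendsto yseq atTop (𝓝 y)) (i j : ℤ) :
    ∀ᶠ n in atTop, |deviation (γseq n) y j - deviation (γseq n) y i| < 1 := by
  filter_upwards [eventually_primitive_eq hconv i, eventually_primitive_eq hconv j] with n hi hj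
  simpa only [deviation_sub_deviation, hi, hj] using abs_deviation_sub_lt_one (hmem n) i j

lemma exists_tendsto_slope (hmem : ∀ n, yseq n ∈ sturmSystem (γseq n))
    (hconv : Tendsto yseq atTop (𝓝 y)) : ∃ γ, Tendsto γseq atTop (𝓝 γ) := by
  refine cauchySeq_tendsto_of_complete (Metric.cauchySeq_iff'.2 fun ε hε => ?_)
  obtain ⟨k, hk⟩ := exists_nat_gt (2 / ε)
  have hk₀ : (0 : ℝ) < k := lt_trans (by positivity) hk
  have hkε := (div_lt_iff₀ hε).1 hk
  obtain ⟨N, hN⟩ := eventually_atTop.1 (eventually_abs_deviation_sub_lt_one hmem hconv 0 k)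
  refine ⟨N, fun n hn => ?_⟩
  have hn := hN n hn
  have hN' := hN N le_rfl
  simp only [deviation_sub_deviation, abs_lt, Int.cast_natCast, Int.cast_zero, sub_zero] at hn hN'
  rw [Real.dist_eq, abs_lt]
  constructor <;> nlinarith

lemma abs_deviation_sub_le_one (hmem : ∀ n, yseq n ∈ sturmSystem (γseq n))
    (hconv : Tendsto yseq atTop (𝓝 y)) {γ : ℝ} (hγ : Tendsto γseq atTop (𝓝 γ)) (i j : ℤ) :
    |deviation γ y j - deviation γ y i| ≤ 1 := by
  have hcont : Continuous fun γ' : ℝ => |deviation γ' y j - deviation γ' y i| := by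
    simp only [deviation]; fun_prop
  exact le_of_tendsto ((hcont.tendsto γ).comp hγ)
    ((eventually_abs_deviation_sub_lt_one hmem hconv i j).mono fun n hn => hn.le)

lemma deviation_sub_lt_one_or (hmem : ∀ n, yseq n ∈ sturmSystem (γseq n))
    (hconv : Tendsto yseq atTop (𝓝 y)) (γ : ℝ) :
    (∀ i j, i < j → deviation γ y j - deviation γ y i < 1) ∨
      (∀ i j, i < j → deviation γ y i - deviation γ y j < 1) := by
  by_contra! ⟨⟨i, j, hij, h⟩, ⟨i', j', hij', h'⟩⟩
  obtain ⟨n, hn, hn'⟩ := ((eventually_abs_deviation_sub_lt_one hmem hconv i j).and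
    (eventually_abs_deviation_sub_lt_one hmem hconv i' j')).exists
  simp only [deviation_sub_deviation, abs_lt, Int.cast_sub] at h h' hn hn'
  have hd : (0 : ℝ) < j - i := by exact_mod_cast sub_pos.2 hij
  have hd' : (0 : ℝ) < j' - i' := by exact_mod_cast sub_pos.2 hij'
  have : γ < γseq n := by nlinarith
  nlinarith

end Limit

lemma exists_periodic_tails {y w₁ w₂ : ℤ → ℤ} {p R L : ℤ} (hp : 0 < p)
    (hw₁ : Periodic w₁ p) (hw₂ : Periodic w₂ p)
    (hR : ∀ i, R ≤ i → y i = w₁ i) (hL : ∀ i, i < L → y i = w₂ i) :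
    ∃ N : ℤ, 0 ≤ N ∧ ∃ p q : ℤ, 1 ≤ p ∧ 1 ≤ q ∧
      (∀ i : ℤ, N ≤ i → y (i + p) = y i) ∧ (∀ i : ℤ, i ≤ -N → y (i - q) = y i) := by
  refine ⟨max 0 (max R (1 - L)), le_max_left _ _, p, p, hp, hp, fun i hi => ?_, fun i hi => ?_⟩
  · rw [hR i (by omega), hR _ (by omega), hw₁]
  · rw [hL i (by omega), hL _ (by omega), hw₂.sub_eq]

section Dichotomy

variable {γ : ℝ} {y : ℤ → ℤ}

lemma primitive_eq_floor {s : ℝ} {i : ℤ} (h : deviation γ y i ∈ Set.Ioc (s - 1) s) :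
    primitive y i = ⌊i * γ + s⌋ := by
  simp only [deviation, Set.mem_Ioc] at h
  rw [eq_comm, Int.floor_eq_iff]
  constructor <;> linarith

lemma primitive_add_one_eq_ceil {s : ℝ} {i : ℤ} (h : deviation γ y i ∈ Set.Ico (s - 1) s) :
    primitive y i + 1 = ⌈i * γ + s⌉ := by
  simp only [deviation, Set.mem_Ico] at h
  rw [eq_comm, Int.ceil_eq_iff]
  push_cast
  constructor <;> linarith

lemma apply_eq_lowerMechanical {s : ℝ} {i : ℤ} (hi : deviation γ y i ∈ Set.Ioc (s - 1) s)
    (hi' : deviation γ y (i + 1) ∈ Set.Ioc (s - 1) s) : y i = lowerMechanical γ s i := by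
  have h := primitive_eq_floor hi'
  push_cast at h
  rw [lowerMechanical, ← h, ← primitive_eq_floor hi, primitive_succ]; ring

lemma apply_eq_upperMechanical {s : ℝ} {i : ℤ} (hi : deviation γ y i ∈ Set.Ico (s - 1) s)
    (hi' : deviation γ y (i + 1) ∈ Set.Ico (s - 1) s) : y i = upperMechanical γ s i := by
  have h := primitive_add_one_eq_ceil hi'
  push_cast at h
  rw [upperMechanical, ← h, ← primitive_add_one_eq_ceil hi, primitive_succ]; ring

lemma exists_rat_eq_of_deviation {s : ℝ} {t u : ℤ} (ht : deviation γ y t = s)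
    (hu : deviation γ y u = s - 1) : ∃ r : ℚ, γ = r := by
  have htu : (t : ℝ) - u ≠ 0 := by
    intro h
    obtain rfl : t = u := by exact_mod_cast sub_eq_zero.1 h
    linarith
  refine ⟨(primitive y t - primitive y u - 1 : ℚ) / (t - u), ?_⟩
  simp only [deviation] at ht hu
  push_cast
  rw [eq_div_iff htu]
  linarith

lemma deviation_periodic {P t u : ℤ} (hy : Periodic y P)
    (hmax : ∀ i, deviation γ y i ≤ deviation γ y t)
    (hmin : ∀ i, deviation γ y u ≤ deviation γ y i) : Periodic (deviation γ y) P := by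
  have hD : Periodic (fun k => deviation γ y (k + P) - deviation γ y k) 1 := fun k => by
    simp only [add_right_comm k 1 P, deviation_succ, hy k]; ring
  have hconst (k : ℤ) :
      deviation γ y (k + P) - deviation γ y k = deviation γ y P - deviation γ y 0 := by
    simpa using hD.int_mul_eq k
  intro k
  linarith [hconst k, hconst t, hconst u, hmax (t + P), hmin (u + P)]

theorem not_periodic_and_periodic_tails {s : ℝ} {t u : ℤ}
    (hrange : ∀ i, deviation γ y i ∈ Set.Icc (s - 1) s) (ht : deviation γ y t = s)
    (hu : deviation γ y u = s - 1)
    (hside : (∀ i j, i < j → deviation γ y j - deviation γ y i < 1) ∨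
      (∀ i j, i < j → deviation γ y i - deviation γ y j < 1)) :
    (¬ ∃ p : ℤ, 1 ≤ p ∧ ∀ i : ℤ, y (i + p) = y i) ∧
      ∃ N : ℤ, 0 ≤ N ∧ ∃ p q : ℤ, 1 ≤ p ∧ 1 ≤ q ∧
        (∀ i : ℤ, N ≤ i → y (i + p) = y i) ∧ (∀ i : ℤ, i ≤ -N → y (i - q) = y i) := by
  obtain ⟨r, hr⟩ := exists_rat_eq_of_deviation ht hu
  have hp : ((r.den : ℤ) : ℝ) * γ = r.num := by rw [hr]; exact_mod_cast Rat.den_mul_eq_num r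
  have hden : (0 : ℤ) < r.den := by exact_mod_cast r.den_pos
  have hperiodic (P : ℤ) (hy : Periodic y P) : Periodic (deviation γ y) P :=
    deviation_periodic hy (fun i => ht ▸ (hrange i).2) (fun i => hu ▸ (hrange i).1)
  rcases hside with h | h
  · have hright (i : ℤ) (hi : u ≤ i) : deviation γ y i < s := by
      rcases hi.eq_or_lt with rfl | hlt
      · linarith
      · linarith [h _ _ hlt]
    have hleft (i : ℤ) (hi : i ≤ t) : s - 1 < deviation γ y i := by
      rcases hi.eq_or_lt with rfl | hlt
      · linarith
      · linarith [h _ _ hlt]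
    refine ⟨fun ⟨P, hP, hy⟩ => ?_, exists_periodic_tails hden (upperMechanical_periodic s hp)
      (lowerMechanical_periodic s hp) (R := u) (L := t) (fun i hi => ?_) (fun i hi => ?_)⟩
    · exact ((hperiodic P hy).forall_of_forall_ge hP (p := (· < s)) hright t).ne ht
    · exact apply_eq_upperMechanical ⟨(hrange i).1, hright i hi⟩
        ⟨(hrange _).1, hright _ (by omega)⟩
    · exact apply_eq_lowerMechanical ⟨hleft i hi.le, (hrange i).2⟩ ⟨hleft _ hi, (hrange _).2⟩
  · have hright (i : ℤ) (hi : t ≤ i) : s - 1 < deviation γ y i := by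
      rcases hi.eq_or_lt with rfl | hlt
      · linarith
      · linarith [h _ _ hlt]
    have hleft (i : ℤ) (hi : i ≤ u) : deviation γ y i < s := by
      rcases hi.eq_or_lt with rfl | hlt
      · linarith
      · linarith [h _ _ hlt]
    refine ⟨fun ⟨P, hP, hy⟩ => ?_, exists_periodic_tails hden (lowerMechanical_periodic s hp)
      (upperMechanical_periodic s hp) (R := t) (L := u) (fun i hi => ?_) (fun i hi => ?_)⟩
    · exact ((hperiodic P hy).forall_of_forall_ge hP (p := (s - 1 < ·)) hright u).ne' hu
    · exact apply_eq_lowerMechanical ⟨hright i hi, (hrange i).2⟩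
        ⟨hright _ (by omega), (hrange _).2⟩
    · exact apply_eq_upperMechanical ⟨(hrange i).1, hleft i hi.le⟩ ⟨(hrange _).1, hleft _ hi⟩

theorem mem_sturmSystem_or_not_periodic (hbal : ∀ i j, |deviation γ y j - deviation γ y i| ≤ 1)
    (hside : (∀ i j, i < j → deviation γ y j - deviation γ y i < 1) ∨
      (∀ i j, i < j → deviation γ y i - deviation γ y j < 1)) :
    y ∈ sturmSystem γ ∨
      ((∃ r : ℚ, γ = (r : ℝ)) ∧
       (¬ ∃ p : ℤ, 1 ≤ p ∧ ∀ i : ℤ, y (i + p) = y i) ∧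
       (∃ N : ℤ, 0 ≤ N ∧ ∃ p q : ℤ, 1 ≤ p ∧ 1 ≤ q ∧
          (∀ i : ℤ, N ≤ i → y (i + p) = y i) ∧
          (∀ i : ℤ, i ≤ -N → y (i - q) = y i))) := by
  obtain ⟨s, hs⟩ := exists_forall_mem_Icc_of_sub_le_one fun i j => (abs_le.1 (hbal i j)).2
  by_cases hu : ∃ u, deviation γ y u = s - 1
  · obtain ⟨u, hu⟩ := hu
    by_cases ht : ∃ t, deviation γ y t = s
    · obtain ⟨t, ht⟩ := ht
      exact .inr ⟨exists_rat_eq_of_deviation ht hu, not_periodic_and_periodic_tails hs ht hu hside⟩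
    · push Not at ht
      have hIco (i : ℤ) : deviation γ y i ∈ Set.Ico (s - 1) s :=
        ⟨(hs i).1, (hs i).2.lt_of_ne (ht i)⟩
      have : y = upperMechanical γ s := funext fun i => apply_eq_upperMechanical (hIco i) (hIco _)
      exact .inl (this ▸ upperMechanical_mem_sturmSystem γ s)
  · push Not at hu
    have hIoc (i : ℤ) : deviation γ y i ∈ Set.Ioc (s - 1) s :=
      ⟨(hs i).1.lt_of_ne (hu i).symm, (hs i).2⟩
    have : y = lowerMechanical γ s := funext fun i => apply_eq_lowerMechanical (hIoc i) (hIoc _)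
    exact .inl (this ▸ lowerMechanical_mem_sturmSystem γ s)

end Dichotomy

end Sturmian

/-- if `y⁽ⁿ⁾ ∈ Y_{γ⁽ⁿ⁾}` converge to `y`, then the slopes converge to some `γ`,
and either `y ∈ Y_γ`, or `γ` is rational and `y` is an aperiodic concatenation of two
periodic semi-infinite words. -/
theorem stmt_7 (γseq : ℕ → ℝ) (yseq : ℕ → (ℤ → ℤ)) (y : ℤ → ℤ)
    (hmem : ∀ n : ℕ, yseq n ∈ sturmSystem (γseq n))
    (hconv : Filter.Tendsto yseq Filter.atTop (nhds y)) :
    ∃ γ : ℝ, Filter.Tendsto γseq Filter.atTop (nhds γ) ∧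
      (y ∈ sturmSystem γ ∨
        ((∃ r : ℚ, γ = (r : ℝ)) ∧
         (¬ ∃ p : ℤ, 1 ≤ p ∧ ∀ i : ℤ, y (i + p) = y i) ∧
         (∃ N : ℤ, 0 ≤ N ∧ ∃ p q : ℤ, 1 ≤ p ∧ 1 ≤ q ∧
            (∀ i : ℤ, N ≤ i → y (i + p) = y i) ∧
            (∀ i : ℤ, i ≤ -N → y (i - q) = y i)))) := by
  obtain ⟨γ, hγ⟩ := Sturmian.exists_tendsto_slope hmem hconv
  exact ⟨γ, hγ, Sturmian.mem_sturmSystem_or_not_periodic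
    (Sturmian.abs_deviation_sub_le_one hmem hconv hγ)
    (Sturmian.deviation_sub_lt_one_or hmem hconv γ)⟩
end

section
/- Let α > 0, let [b,c] ⊆ [0,∞) be a closed interval, and let f : (α,∞) → ℝ be a convex function such that for every t ∈ (α,∞) and every subgradient v of f at t, the intercept f(t) − tv lies in [b,c]. For γ ∈ [b,c] define s(γ) = sup{v ∈ ℝ : γ + tv ≤ f(t) for all t ∈ (α,∞)}. Then for every γ ∈ [b,c] this supremum is over a nonempty set bounded above (so s(γ) ∈ ℝ), the function s is non-increasing on [b,c], and |s(γ) − s(γ')| ≤ |γ − γ'|/α for all γ, γ' ∈ [b,c]. -/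
/-!
A convex function on the open half-line `(α, ∞)` has a supporting line at every point (slope its
right derivative), so some line `t ↦ β + t v` lies below `f`. Raising the intercept from `γ` to
`γ' ≥ γ` and lowering the slope by `(γ' - γ) / α` keeps a line below `f`, because `t > α`; and
lowering the intercept always does. Hence every `s(γ)` is the supremum of a nonempty set, bounded
above by evaluating at one point, `s` is non-increasing, and `s γ ≤ s γ' + (γ' - γ) / α`.
-/

open Set

theorem ConvexOn.add_rightDeriv_mul_sub_le {S : Set ℝ} {f : ℝ → ℝ} {x y : ℝ}
    (hf : ConvexOn ℝ S f) (hx : x ∈ interior S) (hy : y ∈ S) :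
    f x + derivWithin f (Ioi x) x * (y - x) ≤ f y := by
  have hslope : (y - x) * slope f x y = f y - f x := by simpa using sub_smul_slope f x y
  rcases lt_trichotomy y x with hyx | rfl | hxy
  · have h : slope f y x ≤ derivWithin f (Ioi x) x :=
      (hf.slope_le_leftDeriv_of_mem_interior hy hx hyx).trans
        (hf.leftDeriv_le_rightDeriv_of_mem_interior hx)
    rw [slope_comm] at h
    nlinarith
  · simp
  · nlinarith [hf.rightDeriv_le_slope_of_mem_interior hx hy hxy]

/-- The paper's `s(γ)` is `sSup (minorantSlopes f α γ)`. -/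
def minorantSlopes (f : ℝ → ℝ) (α γ : ℝ) : Set ℝ :=
  {v | ∀ t ∈ Ioi α, γ + t * v ≤ f t}

section minorantSlopes

variable {f : ℝ → ℝ} {α γ γ' : ℝ}

theorem minorantSlopes_antitone : Antitone (minorantSlopes f α) :=
  fun _ _ hγ _ hv t ht => (add_le_add_left hγ _).trans (hv t ht)

theorem sub_div_mem_minorantSlopes (hα : 0 < α) {v : ℝ} (hv : v ∈ minorantSlopes f α γ)
    (hγ : γ ≤ γ') : v - (γ' - γ) / α ∈ minorantSlopes f α γ' := by
  intro t ht
  have hshift : γ' - γ ≤ t * ((γ' - γ) / α) := by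
    rw [mul_div_assoc', le_div_iff₀ hα]
    nlinarith [mem_Ioi.mp ht]
  nlinarith [hv t ht]

theorem bddAbove_minorantSlopes : BddAbove (minorantSlopes f α γ) := by
  set t₀ := |α| + 1
  have ht₀ : 0 < t₀ := by positivity
  have hαt₀ : α < t₀ := lt_add_of_le_of_pos (le_abs_self α) one_pos
  refine ⟨(f t₀ - γ) / t₀, fun v hv => ?_⟩
  rw [le_div_iff₀ ht₀]
  linarith [hv t₀ hαt₀]

theorem ConvexOn.minorantSlopes_nonempty (hα : 0 < α) (hf : ConvexOn ℝ (Ioi α) f) (γ : ℝ) :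
    (minorantSlopes f α γ).Nonempty := by
  set t₀ := α + 1
  set v₀ := derivWithin f (Ioi t₀) t₀
  have hsupport : v₀ ∈ minorantSlopes f α (f t₀ - t₀ * v₀) := fun t ht => by
    have := hf.add_rightDeriv_mul_sub_le (x := t₀) (by simp [t₀]) ht
    linarith
  obtain hγ | hγ := le_total γ (f t₀ - t₀ * v₀)
  · exact ⟨v₀, minorantSlopes_antitone hγ hsupport⟩
  · exact ⟨_, sub_div_mem_minorantSlopes hα hsupport hγ⟩

theorem ConvexOn.sSup_minorantSlopes_antitone (hα : 0 < α) (hf : ConvexOn ℝ (Ioi α) f) :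
    Antitone fun γ => sSup (minorantSlopes f α γ) := fun _ γ' hγ =>
  csSup_le_csSup bddAbove_minorantSlopes (hf.minorantSlopes_nonempty hα γ')
    (minorantSlopes_antitone hγ)

theorem ConvexOn.sSup_minorantSlopes_le_add (hα : 0 < α) (hf : ConvexOn ℝ (Ioi α) f)
    (hγ : γ ≤ γ') :
    sSup (minorantSlopes f α γ) ≤ sSup (minorantSlopes f α γ') + (γ' - γ) / α := by
  refine csSup_le (hf.minorantSlopes_nonempty hα γ) fun v hv => ?_
  have := le_csSup bddAbove_minorantSlopes (sub_div_mem_minorantSlopes hα hv hγ)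
  linarith

theorem ConvexOn.abs_sub_sSup_minorantSlopes_le (hα : 0 < α) (hf : ConvexOn ℝ (Ioi α) f)
    (γ γ' : ℝ) :
    |sSup (minorantSlopes f α γ) - sSup (minorantSlopes f α γ')| ≤ |γ - γ'| / α := by
  wlog hγ : γ ≤ γ' generalizing γ γ'
  · rw [abs_sub_comm, abs_sub_comm γ]
    exact this γ' γ (le_of_not_ge hγ)
  have hmono := hf.sSup_minorantSlopes_antitone hα hγ
  have hshift := hf.sSup_minorantSlopes_le_add hα hγ
  have hnonneg : 0 ≤ (γ' - γ) / α := div_nonneg (sub_nonneg.mpr hγ) hα.le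
  rw [abs_sub_comm γ, abs_of_nonneg (sub_nonneg.mpr hγ), abs_sub_le_iff]
  constructor <;> linarith

end minorantSlopes

theorem stmt_13_general (α : ℝ) (hα : 0 < α) (b c : ℝ)
    (f : ℝ → ℝ) (hconv : ConvexOn ℝ (Set.Ioi α) f) :
    (∀ γ ∈ Set.Icc b c,
      ({v : ℝ | ∀ t ∈ Set.Ioi α, γ + t * v ≤ f t}).Nonempty ∧
      BddAbove {v : ℝ | ∀ t ∈ Set.Ioi α, γ + t * v ≤ f t}) ∧
    (∀ γ ∈ Set.Icc b c, ∀ γ' ∈ Set.Icc b c, γ ≤ γ' →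
      sSup {v : ℝ | ∀ t ∈ Set.Ioi α, γ' + t * v ≤ f t} ≤
        sSup {v : ℝ | ∀ t ∈ Set.Ioi α, γ + t * v ≤ f t}) ∧
    (∀ γ ∈ Set.Icc b c, ∀ γ' ∈ Set.Icc b c,
      |sSup {v : ℝ | ∀ t ∈ Set.Ioi α, γ + t * v ≤ f t} -
        sSup {v : ℝ | ∀ t ∈ Set.Ioi α, γ' + t * v ≤ f t}| ≤ |γ - γ'| / α) :=
  ⟨fun γ _ => ⟨hconv.minorantSlopes_nonempty hα γ, bddAbove_minorantSlopes⟩,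
    fun _ _ _ _ hγ => hconv.sSup_minorantSlopes_antitone hα hγ,
    fun γ _ γ' _ => hconv.abs_sub_sSup_minorantSlopes_le hα γ γ'⟩

/-- with `s(γ) = sup{v : γ + tv ≤ f(t) for all t ∈ (α,∞)}`, the defining set
is nonempty and bounded above for each `γ ∈ [b,c]`, and `s` is non-increasing and Lipschitz
with constant `1/α` on `[b,c]`. -/
theorem stmt_13 (α : ℝ) (hα : 0 < α) (b c : ℝ) (hb : 0 ≤ b) (hbc : b ≤ c)
    (f : ℝ → ℝ) (hconv : ConvexOn ℝ (Set.Ioi α) f)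
    (hint : ∀ t ∈ Set.Ioi α, ∀ v : ℝ,
      (∀ u ∈ Set.Ioi α, f t + v * (u - t) ≤ f u) →
      f t - t * v ∈ Set.Icc b c) :
    (∀ γ ∈ Set.Icc b c,
      ({v : ℝ | ∀ t ∈ Set.Ioi α, γ + t * v ≤ f t}).Nonempty ∧
      BddAbove {v : ℝ | ∀ t ∈ Set.Ioi α, γ + t * v ≤ f t}) ∧
    (∀ γ ∈ Set.Icc b c, ∀ γ' ∈ Set.Icc b c, γ ≤ γ' →
      sSup {v : ℝ | ∀ t ∈ Set.Ioi α, γ' + t * v ≤ f t} ≤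
        sSup {v : ℝ | ∀ t ∈ Set.Ioi α, γ + t * v ≤ f t}) ∧
    (∀ γ ∈ Set.Icc b c, ∀ γ' ∈ Set.Icc b c,
      |sSup {v : ℝ | ∀ t ∈ Set.Ioi α, γ + t * v ≤ f t} -
        sSup {v : ℝ | ∀ t ∈ Set.Ioi α, γ' + t * v ≤ f t}| ≤ |γ - γ'| / α) :=
  stmt_13_general α hα b c f hconv
end
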